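/- In a well-formed PEG (all cycles pass through the second child edge of some θ node, computations at outer loop depth do not reference inner-loop θ nodes except through eval/pass first-child edges, and every cycle containing an eval_ℓ or pass_ℓ node contains a θ_{ℓ'} node with ℓ' < ℓ), the system of semantic equations ⟦n⟧ = L(n)(⟦C(n)⟧) has a unique solution assigning a semantic value to each node. -/

import Mathlib

open Classical

noncomputable section

/-- Loop-lifted values for a single loop identifier: iteration count ↦ value or ⊥. -/
abbrev Val1 (τ : Type) := ℕ → Option τ

/-- monotonize for the single loop. -/
def mono1 {τ : Type} (v : Val1 τ) : Val1 τ :=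
  fun i => if ∃ j < i, v j = none then none else v i

/-- Node labels: the primitive PEG operators and lifted domain operators. -/
inductive Lab (τ : Type) where
  | phi : Lab τ
  | theta : Lab τ
  | eval : Lab τ
  | pass : Lab τ
  | op : (List (Option τ) → Option τ) → Lab τ

/-- Semantics of each label, applied to the list of child values. -/
def applyLab {τ : Type} (toBool : τ → Option Bool) (toNat : τ → Option ℕ)
    (fromNat : ℕ → τ) : Lab τ → List (Val1 τ) → Val1 τ
  | .phi, [c, t, f] => fun i =>
      match (c i).bind toBool with
      | none => none
      | some true => t i
      | some false => f i
  | .theta, [b, l] => fun i => if i = 0 then b i else l (i - 1)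
  | .eval, [v, idx] => fun i =>
      match (idx i).bind toNat with
      | none => none
      | some n => mono1 v n
  | .pass, [c] => fun _ =>
      if h : ∃ k, (mono1 c k).bind toBool = some true
      then some (fromNat (Nat.find h)) else none
  | .op f, args => fun i => f (args.map (· i))
  | _, _ => fun _ => none

set_option linter.unusedSectionVars false

namespace PEGAux

variable {τ : Type} {N : Type} [Fintype N] (lab : N → Lab τ) (ch : N → List N)

/-- the "acyclic" edge relation from wf1 -/
def R' (a b : N) : Prop := ∃ k, (ch a)[k]? = some b ∧ ¬(lab a = Lab.theta ∧ k = 1)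

/-- dependency of (n, i) on (b, j) in the semantic equations -/
def Dep (n : N) (i : ℕ) (b : N) (j : ℕ) : Prop :=
  b ∈ ch n ∧ ((lab n = Lab.eval ∨ lab n = Lab.pass) ∨ (j = i ∧ R' lab ch n b) ∨ j + 1 = i)

/-- number of eval/pass nodes reachable (incl. itself) -/
def dd (n : N) : ℕ :=
  (Finset.univ.filter fun m =>
    (lab m = Lab.eval ∨ lab m = Lab.pass) ∧
      (m = n ∨ Relation.TransGen (fun a b => b ∈ ch a) n m)).card

/-- rank in the acyclic part -/
def hh (n : N) : ℕ :=
  (Finset.univ.filter fun m => Relation.TransGen (R' lab ch) n m).card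

def mm (p : N × ℕ) : ℕ × ℕ × ℕ := (dd lab ch p.1, p.2, hh lab ch p.1)

def Mlt (p q : N × ℕ) : Prop :=
  Prod.Lex (· < ·) (Prod.Lex (· < ·) (· < ·)) (mm lab ch p) (mm lab ch q)

lemma wfMlt : WellFounded (Mlt lab ch) :=
  InvImage.wf (mm lab ch)
    (WellFounded.prod_lex wellFounded_lt (WellFounded.prod_lex wellFounded_lt wellFounded_lt))

lemma dd_le {a b : N} (hab : b ∈ ch a) : dd lab ch b ≤ dd lab ch a := by
  apply Finset.card_le_card
  intro m hm
  simp only [Finset.mem_filter, Finset.mem_univ, true_and] at hm ⊢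
  refine ⟨hm.1, Or.inr ?_⟩
  rcases hm.2 with rfl | htr
  · exact Relation.TransGen.single hab
  · exact Relation.TransGen.head hab htr

lemma dd_lt (wf2 : ∀ n : N, (lab n = Lab.eval ∨ lab n = Lab.pass) →
      ¬ Relation.TransGen (fun a b => b ∈ ch a) n n)
    {a b : N} (ha : lab a = Lab.eval ∨ lab a = Lab.pass) (hab : b ∈ ch a) :
    dd lab ch b < dd lab ch a := by
  apply Finset.card_lt_card
  constructor
  · intro m hm
    simp only [Finset.mem_filter, Finset.mem_univ, true_and] at hm ⊢
    refine ⟨hm.1, Or.inr ?_⟩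
    rcases hm.2 with rfl | htr
    · exact Relation.TransGen.single hab
    · exact Relation.TransGen.head hab htr
  · intro hsub
    have hamem : a ∈ Finset.univ.filter fun m =>
        (lab m = Lab.eval ∨ lab m = Lab.pass) ∧
          (m = a ∨ Relation.TransGen (fun a b => b ∈ ch a) a m) := by
      simp only [Finset.mem_filter, Finset.mem_univ, true_and]
      exact ⟨ha, Or.inl trivial⟩
    have := hsub hamem
    simp only [Finset.mem_filter, Finset.mem_univ, true_and] at this
    rcases this.2 with rfl | htr
    · exact wf2 a ha (Relation.TransGen.single hab)
    · exact wf2 a ha (Relation.TransGen.head hab htr)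

lemma hh_lt (wf1 : ∀ n : N, ¬ Relation.TransGen (R' lab ch) n n)
    {a b : N} (hab : R' lab ch a b) : hh lab ch b < hh lab ch a := by
  apply Finset.card_lt_card
  constructor
  · intro m hm
    simp only [Finset.mem_filter, Finset.mem_univ, true_and] at hm ⊢
    exact Relation.TransGen.head hab hm
  · intro hsub
    have hbmem : b ∈ Finset.univ.filter fun m => Relation.TransGen (R' lab ch) a m := by
      simp only [Finset.mem_filter, Finset.mem_univ, true_and]
      exact Relation.TransGen.single hab
    have := hsub hbmem
    simp only [Finset.mem_filter, Finset.mem_univ, true_and] at this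
    exact wf1 b this

lemma R'_mem {a b : N} (h : R' lab ch a b) : b ∈ ch a := by
  obtain ⟨k, hk, -⟩ := h
  exact List.mem_iff_getElem?.mpr ⟨k, hk⟩

lemma Dep_lt (wf1 : ∀ n : N, ¬ Relation.TransGen (R' lab ch) n n)
    (wf2 : ∀ n : N, (lab n = Lab.eval ∨ lab n = Lab.pass) →
      ¬ Relation.TransGen (fun a b => b ∈ ch a) n n)
    {n b : N} {i j : ℕ} (hd : Dep lab ch n i b j) : Mlt lab ch (b, j) (n, i) := by
  obtain ⟨hmem, hcase⟩ := hd
  unfold Mlt mm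
  rcases hcase with hep | ⟨rfl, hR⟩ | hji
  · exact Prod.Lex.left _ _ (dd_lt lab ch wf2 hep hmem)
  · rcases lt_or_eq_of_le (dd_le lab ch hmem) with hlt | heq
    · exact Prod.Lex.left _ _ hlt
    · rw [heq]
      exact Prod.Lex.right _ (Prod.Lex.right _ (hh_lt lab ch wf1 hR))
  · rcases lt_or_eq_of_le (dd_le lab ch hmem) with hlt | heq
    · exact Prod.Lex.left _ _ hlt
    · rw [heq]
      exact Prod.Lex.right _ (Prod.Lex.left _ _ (by omega))

end PEGAux

open PEGAux in
/-- congruence: the equation for (n, i) only depends on Dep-related pairs -/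
lemma applyLab_congr {τ : Type}
    (toBool : τ → Option Bool) (toNat : τ → Option ℕ) (fromNat : ℕ → τ)
    {N : Type} [Fintype N] (lab : N → Lab τ) (ch : N → List N)
    (n : N) (i : ℕ) (v w : N → Val1 τ)
    (hvw : ∀ b j, Dep lab ch n i b j → v b j = w b j) :
    applyLab toBool toNat fromNat (lab n) ((ch n).map v) i =
    applyLab toBool toNat fromNat (lab n) ((ch n).map w) i := by
  have hstep : lab n ≠ Lab.theta → ∀ b ∈ ch n, v b i = w b i := by
    intro hne b hb
    obtain ⟨k, hk⟩ := List.mem_iff_getElem?.mp hb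
    exact hvw b i ⟨hb, Or.inr (Or.inl ⟨rfl, ⟨k, hk, fun hcon => hne hcon.1⟩⟩)⟩
  have hall : (lab n = Lab.eval ∨ lab n = Lab.pass) → (ch n).map v = (ch n).map w := by
    intro hep
    exact List.map_congr_left fun b hb => funext fun j => hvw b j ⟨hb, Or.inl hep⟩
  cases hl : lab n with
  | eval => rw [hall (by rw [hl]; exact Or.inl rfl)]
  | pass => rw [hall (by rw [hl]; exact Or.inr rfl)]
  | op f =>
    simp only [applyLab, List.map_map]
    congr 1
    exact List.map_congr_left fun b hb => hstep (by rw [hl]; simp) b hb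
  | phi =>
    have hne : lab n ≠ Lab.theta := by rw [hl]; simp
    rcases hc : ch n with _ | ⟨c, _ | ⟨t, _ | ⟨f, _ | _⟩⟩⟩ <;> try rfl
    have h1 : v c i = w c i := hstep hne c (by rw [hc]; simp)
    have h2 : v t i = w t i := hstep hne t (by rw [hc]; simp)
    have h3 : v f i = w f i := hstep hne f (by rw [hc]; simp)
    simp only [List.map_cons, List.map_nil, applyLab, h1, h2, h3]
  | theta =>
    rcases hc : ch n with _ | ⟨b0, _ | ⟨l0, _ | _⟩⟩ <;> try rfl
    have hb0 : b0 ∈ ch n := by rw [hc]; simp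
    have hl0 : l0 ∈ ch n := by rw [hc]; simp
    by_cases hi : i = 0
    · subst hi
      have h1 : v b0 0 = w b0 0 :=
        hvw b0 0 ⟨hb0, Or.inr (Or.inl ⟨rfl, ⟨0, by rw [hc]; rfl, by simp⟩⟩)⟩
      simp only [List.map_cons, List.map_nil, applyLab, h1]
      simp
    · have h1 : v l0 (i - 1) = w l0 (i - 1) :=
        hvw l0 (i - 1) ⟨hl0, Or.inr (Or.inr (by omega))⟩
      simp only [List.map_cons, List.map_nil, applyLab, if_neg hi, h1]

/-- In a well-formed PEG (all cycles pass through the second child edge of a θ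
node, and no cycle contains an eval or pass node — the single-loop instance of
the paper's conditions), the system of semantic equations
⟦n⟧ = L(n)(⟦C(n)⟧) has a unique solution. -/
theorem wellformed_peg_unique_semantics {τ : Type}
    (toBool : τ → Option Bool) (toNat : τ → Option ℕ) (fromNat : ℕ → τ)
    {N : Type} [Fintype N] (lab : N → Lab τ) (ch : N → List N)
    (wf1 : ∀ n : N, ¬ Relation.TransGen
      (fun a b => ∃ k, (ch a)[k]? = some b ∧ ¬(lab a = Lab.theta ∧ k = 1)) n n)
    (wf2 : ∀ n : N, (lab n = Lab.eval ∨ lab n = Lab.pass) →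
      ¬ Relation.TransGen (fun a b => b ∈ ch a) n n) :
    ∃! sem : N → Val1 τ,
      ∀ n, sem n = applyLab toBool toNat fromNat (lab n) ((ch n).map sem) := by
  classical
  have wf1' : ∀ n : N, ¬ Relation.TransGen (PEGAux.R' lab ch) n n := wf1
  -- the solution, by well-founded recursion on the measure
  let F : N × ℕ → Option τ := (PEGAux.wfMlt lab ch).fix
    (fun p rec => applyLab toBool toNat fromNat (lab p.1)
      ((ch p.1).map (fun b j =>
        if h : PEGAux.Mlt lab ch (b, j) p then rec (b, j) h else none)) p.2)
  let sem : N → Val1 τ := fun n i => F (n, i)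
  have hF : ∀ p : N × ℕ, F p = applyLab toBool toNat fromNat (lab p.1)
      ((ch p.1).map (fun b j =>
        if _ : PEGAux.Mlt lab ch (b, j) p then F (b, j) else none)) p.2 := fun p =>
    WellFounded.fix_eq _ _ p
  have hsem : ∀ n, sem n = applyLab toBool toNat fromNat (lab n) ((ch n).map sem) := by
    intro n
    funext i
    show F (n, i) = _
    rw [hF (n, i)]
    exact applyLab_congr toBool toNat fromNat lab ch n i _ sem fun b j hd => by
      simp only [dif_pos (PEGAux.Dep_lt lab ch wf1' wf2 hd)]
      rfl
  refine ⟨sem, hsem, ?_⟩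
  intro s hs
  funext n
  have key : ∀ p : N × ℕ, s p.1 p.2 = sem p.1 p.2 := by
    intro p
    induction p using (PEGAux.wfMlt lab ch).induction with
    | _ p ih =>
      obtain ⟨n, i⟩ := p
      have h1 : s n i = applyLab toBool toNat fromNat (lab n) ((ch n).map s) i :=
        congrFun (hs n) i
      have h2 : sem n i = applyLab toBool toNat fromNat (lab n) ((ch n).map sem) i :=
        congrFun (hsem n) i
      rw [h1, h2]
      exact applyLab_congr toBool toNat fromNat lab ch n i s sem fun b j hd =>
        ih (b, j) (PEGAux.Dep_lt lab ch wf1' wf2 hd)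
  funext i
  exact key (n, i)


end
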